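/- arXiv:1804.09527 — 4 statements merged into one kernel-verified Lean document; each statement's English description precedes it below -/
import Mathlib

section
/- Let k' be a field, let k'' be a finite purely inseparable field extension of k', and let k_s be a separable closure of k'. Then the tensor product k'' ⊗_{k'} k_s is a field, and this field is separably closed. -/
open scoped TensorProduct

/-- Let `k'` be a field, `k''` a finite purely inseparable field extension
of `k'`, and `ks` a separable closure of `k'`.  Then `k'' ⊗[k'] ks` is a field, and this
field is separably closed. -/
theorem tensor_sepClosure_isField_isSepClosed
    (k' k'' ks : Type*) [Field k'] [Field k''] [Field ks]
    [Algebra k' k''] [FiniteDimensional k' k''] [IsPurelyInseparable k' k'']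
    [Algebra k' ks] [IsSepClosure k' ks] :
    ∃ hf : IsField (k'' ⊗[k'] ks), @IsSepClosed (k'' ⊗[k'] ks) hf.toField := by
  classical
  haveI : Algebra.IsSeparable k' ks := IsSepClosure.separable
  haveI : IsSepClosed ks := IsSepClosure.sep_closed k'
  haveI : Algebra.IsAlgebraic k' k'' := Algebra.IsAlgebraic.of_finite k' k''
  set T := k'' ⊗[k'] ks with hT
  let K := AlgebraicClosure ks
  let g : k'' →ₐ[k'] K := IsAlgClosed.lift
  letI : Algebra k'' K := g.toRingHom.toAlgebra
  haveI : IsScalarTower k' k'' K := IsScalarTower.of_algebraMap_eq fun x => (g.commutes x).symm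
  let f0 : k'' →ₐ[k''] K := Algebra.ofId k'' K
  let gs : ks →ₐ[k'] K := IsScalarTower.toAlgHom k' ks K
  let Φ : T →ₐ[k''] K := Algebra.TensorProduct.lift f0 gs fun _ _ => Commute.all _ _
  have hΦt : ∀ (x : k'') (s : ks), Φ (x ⊗ₜ s) = g x * algebraMap ks K s := fun x s => by
    simp [Φ, f0, gs, Algebra.TensorProduct.lift_tmul]
    rfl
  -- basis of T over k''
  let c := Module.Basis.ofVectorSpace k' ks
  let bT := Algebra.TensorProduct.basis k'' c
  have hΦb : ∀ i, Φ (bT i) = algebraMap ks K (c i) := fun i => by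
    rw [show bT i = (1:k'') ⊗ₜ[k'] (c i) from Algebra.TensorProduct.basis_apply c i, hΦt,
      map_one, one_mul]
  have hsep : ∀ i, IsSeparable k' (algebraMap ks K (c i)) := fun i => by
    rw [IsSeparable, minpoly.algebraMap_eq (algebraMap ks K).injective]
    exact Algebra.IsSeparable.isSeparable k' (c i)
  have hli0 : LinearIndependent k' fun i => algebraMap ks K (c i) := by
    have h2 := c.linearIndependent.map' (IsScalarTower.toAlgHom k' ks K).toLinearMap
      (LinearMap.ker_eq_bot.2 (algebraMap ks K).injective)
    exact h2
  have hli : LinearIndependent k'' fun i => algebraMap ks K (c i) :=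
    hli0.map_of_isPurelyInseparable_of_isSeparable k'' hsep
  have hinj : Function.Injective Φ := by
    rw [injective_iff_map_eq_zero]
    intro x hx
    have hrep := bT.linearCombination_repr x
    have h0 : Finsupp.linearCombination k'' (fun i => algebraMap ks K (c i)) (bT.repr x) = 0 := by
      have h1 : Φ.toLinearMap (Finsupp.linearCombination k'' bT (bT.repr x)) = 0 := by
        rw [hrep]; exact hx
      rw [Finsupp.apply_linearCombination] at h1
      have h2 : (fun i => algebraMap ks K (c i)) = (⇑Φ.toLinearMap ∘ ⇑bT) := by
        funext i; exact (hΦb i).symm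
      rw [h2]; exact h1
    have := linearIndependent_iff.1 hli _ h0
    rw [← hrep, this, map_zero]
  -- uniform Frobenius claim
  set q := ringExpChar k' with hq
  haveI : ExpChar k' q := ringExpChar.expChar k'
  have halgK : Function.Injective (algebraMap k'' T) := by
    have : ∀ x : k'', Φ (algebraMap k'' T x) = g x := fun x => by
      rw [show algebraMap k'' T x = x ⊗ₜ[k'] (1:ks) from rfl, hΦt, map_one, mul_one]
    intro a b hab
    have h3 := congrArg Φ hab
    rw [this, this] at h3
    exact g.toRingHom.injective h3
  haveI : ExpChar k'' q := expChar_of_injective_ringHom (algebraMap k' k'').injective q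
  haveI hexpT : ExpChar T q := expChar_of_injective_ringHom
    (show Function.Injective (algebraMap k'' T) from halgK) q
  have key : ∀ z : T, ∃ (n : ℕ) (s : ks), z ^ q ^ n = (1:k'') ⊗ₜ[k'] s := by
    intro z
    induction z using TensorProduct.induction_on with
    | zero =>
      exact ⟨0, 0, by simp⟩
    | tmul x s =>
      obtain ⟨n, y, hy⟩ := (isPurelyInseparable_iff_pow_mem k' q).1 ‹IsPurelyInseparable k' k''› x
      refine ⟨n, y • s ^ q ^ n, ?_⟩
      rw [Algebra.TensorProduct.tmul_pow, ← hy, Algebra.algebraMap_eq_smul_one,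
        TensorProduct.smul_tmul]
    | add a b ha hb =>
      obtain ⟨m, s1, h1⟩ := ha
      obtain ⟨l, s2, h2⟩ := hb
      refine ⟨m + l, s1 ^ q ^ l + s2 ^ q ^ m, ?_⟩
      have e1 : a ^ q ^ (m + l) = (1:k'') ⊗ₜ[k'] (s1 ^ q ^ l) := by
        rw [pow_add, pow_mul, h1, Algebra.TensorProduct.tmul_pow, one_pow]
      have e2 : b ^ q ^ (m + l) = (1:k'') ⊗ₜ[k'] (s2 ^ q ^ m) := by
        rw [add_comm m l, pow_add, pow_mul, h2, Algebra.TensorProduct.tmul_pow, one_pow]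
      rw [add_pow_expChar_pow, e1, e2, TensorProduct.tmul_add]
  have hqpos : ∀ n : ℕ, 1 ≤ q ^ n := fun n => Nat.one_le_pow _ _ (expChar_pos k' q)
  -- the field structure
  have hf : IsField T := by
    refine ⟨⟨0, 1, fun h => by simpa using congrArg Φ h⟩, mul_comm, ?_⟩
    intro a ha
    obtain ⟨n, s, hs⟩ := key a
    have hs0 : s ≠ 0 := by
      rintro rfl
      rw [TensorProduct.tmul_zero] at hs
      have hz : Φ a ^ q ^ n = 0 := by
        rw [← map_pow, hs, map_zero]
      have h4 : Φ a = 0 := (pow_eq_zero_iff (Nat.one_le_iff_ne_zero.1 (hqpos n))).1 hz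
      exact ha (hinj (show Φ a = Φ 0 by rw [map_zero]; exact h4))
    refine ⟨a ^ (q ^ n - 1) * (1:k'') ⊗ₜ[k'] s⁻¹, ?_⟩
    rw [← mul_assoc, ← pow_succ', Nat.sub_add_cancel (hqpos n), hs,
      Algebra.TensorProduct.tmul_mul_tmul, one_mul, mul_inv_cancel₀ hs0]
    exact (Algebra.TensorProduct.one_def (R := k') (A := k'') (B := ks)).symm
  -- separably closed
  letI fT : Field T := hf.toField
  letI : Algebra ks T := Algebra.TensorProduct.rightAlgebra
  have halg : ∀ s : ks, algebraMap ks T s = (1:k'') ⊗ₜ[k'] s := fun s => rfl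
  haveI : Algebra.IsAlgebraic ks T := by
    constructor
    intro z
    obtain ⟨n, s, hs⟩ := key z
    refine ⟨Polynomial.X ^ q ^ n - Polynomial.C s, ?_, ?_⟩
    · exact Polynomial.X_pow_sub_C_ne_zero (hqpos n) s
    · rw [map_sub, map_pow, Polynomial.aeval_X, Polynomial.aeval_C, hs, halg, sub_self]
  exact ⟨hf, Algebra.IsAlgebraic.isSepClosed (F := ks) (E := T)⟩
end

section
/- Let R be a Dedekind domain and let I and I' be nonzero ideals of R. Then there exists a faithfully flat étale R-algebra S such that the S-modules S ⊗_R (R ⊕ I) and S ⊗_R (R ⊕ I') are isomorphic. -/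
/-!
A nonzero ideal `I` of a Dedekind domain is invertible, hence locally principal: if `I * J = (c)`
with `c ≠ 0`, every product `a * j` with `a ∈ I`, `j ∈ J` equals `c * z`, and `I` is generated by
`a` once `z` is inverted; as `c ∈ I * J`, these `z` generate the unit ideal. Taking finitely many
`z` that work for `I` and `I'` at once, `S = ∏ R[1/z]` is étale and faithfully flat, `I S` and
`I' S` are principal ideals containing non-zero-divisors, and flatness gives `S ⊗ I ≅ I S ≅ S`,
so both base changes are `S × S`.
-/

open scoped TensorProduct nonZeroDivisors Pointwise

universe u

namespace Ideal

variable {R : Type*} [CommRing R]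

/-- The elements `z` such that `I` becomes principal, generated by an element of `I`, once `z` is
inverted. -/
def principalizers (I : Ideal R) : Set R :=
  {z | ∃ a ∈ I, ∀ x ∈ I, a ∣ z * x}

variable {I : Ideal R}

lemma mul_mem_principalizers (w : R) {z : R} (hz : z ∈ I.principalizers) :
    w * z ∈ I.principalizers := by
  obtain ⟨a, ha, hdvd⟩ := hz
  exact ⟨a, ha, fun x hx => by rw [mul_assoc]; exact (hdvd x hx).mul_left w⟩

lemma span_principalizers_inter_eq_top {J : Ideal R} (hI : span I.principalizers = ⊤)
    (hJ : span J.principalizers = ⊤) :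
    span (I.principalizers ∩ J.principalizers) = ⊤ := by
  refine top_le_iff.mp ?_
  calc ⊤ = span I.principalizers * span J.principalizers := by rw [hI, hJ, top_mul]
    _ = span (I.principalizers * J.principalizers) := span_mul_span' _ _
    _ ≤ span (I.principalizers ∩ J.principalizers) := by
      refine span_mono ?_
      rintro _ ⟨z, hz, w, hw, rfl⟩
      exact ⟨by simpa only [mul_comm] using mul_mem_principalizers w hz,
        mul_mem_principalizers z hw⟩

lemma isPrincipal_map_of_mem_principalizers {T : Type*} [CommRing T] [Algebra R T] {z : R}
    (hz : z ∈ I.principalizers) (hu : IsUnit (algebraMap R T z)) :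
    (I.map (algebraMap R T)).IsPrincipal := by
  obtain ⟨a, ha, hdvd⟩ := hz
  refine ⟨algebraMap R T a, le_antisymm ?_ ?_⟩
  · refine map_le_iff_le_comap.mpr fun x hx => ?_
    obtain ⟨y, hy⟩ := hdvd x hx
    refine mem_span_singleton'.mpr ⟨algebraMap R T y * ↑hu.unit⁻¹, ?_⟩
    rw [mul_right_comm, ← map_mul, mul_comm y, ← hy, map_mul, mul_right_comm, IsUnit.mul_val_inv,
      one_mul]
  · exact span_le.mpr (Set.singleton_subset_iff.mpr (mem_map_of_mem _ ha))

lemma span_principalizers_eq_top_of_mul_eq_span [IsDomain R] {J : Ideal R} {c : R} (hc : c ≠ 0)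
    (hIJ : I * J = span {c}) : span I.principalizers = ⊤ := by
  have key : ∀ y ∈ I * J, ∃ z ∈ span I.principalizers, y = c * z := by
    intro y hy
    refine Submodule.mul_induction_on hy (fun a ha j hj => ?_) ?_
    · obtain ⟨z, hz⟩ := mem_span_singleton'.mp (hIJ ▸ mul_mem_mul ha hj)
      refine ⟨z, subset_span ⟨a, ha, fun x hx => ?_⟩, by rw [← hz, mul_comm]⟩
      obtain ⟨w, hw⟩ := mem_span_singleton'.mp (hIJ ▸ mul_mem_mul hx hj)
      refine ⟨w, mul_left_cancel₀ hc ?_⟩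
      linear_combination x * hz - a * hw
    · rintro _ _ ⟨z, hz, rfl⟩ ⟨w, hw, rfl⟩
      exact ⟨z + w, add_mem hz hw, by ring⟩
  obtain ⟨z, hz, hcz⟩ := key c (hIJ ▸ mem_span_singleton_self c)
  rw [eq_top_iff_one, ← mul_left_cancel₀ hc (hcz.symm.trans (mul_one c).symm)]
  exact hz

lemma span_principalizers_eq_top [IsDedekindDomain R] (hI : I ≠ ⊥) :
    span I.principalizers = ⊤ := by
  obtain ⟨c, hcI, hc⟩ := Submodule.exists_mem_ne_zero_of_ne_bot hI
  obtain ⟨J, hJ⟩ := dvd_iff_le.mpr ((span_singleton_le_iff_mem I).mpr hcI)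
  exact span_principalizers_eq_top_of_mul_eq_span hc hJ.symm

section Pi

variable {ι : Type*} [Finite ι] {A : ι → Type*} [∀ i, CommRing (A i)] [∀ i, Algebra R (A i)]

lemma map_algebraMap_pi (I : Ideal R) :
    I.map (algebraMap R (Π i, A i)) = pi fun i => I.map (algebraMap R (A i)) := by
  calc I.map (algebraMap R (Π i, A i))
      _ = pi fun i => (I.map (algebraMap R (Π i, A i))).map (Pi.evalRingHom A i) :=
        (piOrderIso.symm_apply_apply _).symm
      _ = pi fun i => I.map (algebraMap R (A i)) := by simp_rw [map_map]; rfl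

lemma isPrincipal_map_pi (h : ∀ i, (I.map (algebraMap R (A i))).IsPrincipal) :
    (I.map (algebraMap R (Π i, A i))).IsPrincipal := by
  choose g hg using fun i => (h i).principal
  refine ⟨g, ?_⟩
  rw [map_algebraMap_pi]
  exact (congrArg pi (funext hg)).trans pi_span

end Pi

lemma isPrincipal_map_pi_localizationAway {ι : Type*} [Finite ι] {f : ι → R}
    (hf : ∀ i, f i ∈ I.principalizers) :
    (I.map (algebraMap R (Π i, Localization.Away (f i)))).IsPrincipal :=
  isPrincipal_map_pi fun i =>
    isPrincipal_map_of_mem_principalizers (hf i) (IsLocalization.Away.algebraMap_isUnit (f i))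

end Ideal

lemma Module.FaithfullyFlat.pi_localizationAway {R : Type*} [CommRing R] {ι : Type*} [Finite ι]
    (f : ι → R) (hf : Ideal.span (Set.range f) = ⊤) :
    Module.FaithfullyFlat R (Π i, Localization.Away (f i)) := by
  refine .of_comap_surjective fun p => ?_
  obtain ⟨i, hi⟩ : ∃ i, f i ∉ p.asIdeal := by
    by_contra! h
    exact p.isPrime.ne_top (top_le_iff.mp (hf ▸ Ideal.span_le.mpr (Set.range_subset_iff.mpr h)))
  obtain ⟨q, hq⟩ :=
    (PrimeSpectrum.localization_away_comap_range (Localization.Away (f i)) (f i)).ge hi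
  refine ⟨PrimeSpectrum.comap (Pi.evalRingHom _ i) q, ?_⟩
  rw [← hq, ← Function.comp_apply (f := PrimeSpectrum.comap _), ← PrimeSpectrum.comap_comp]
  rfl

section
variable {R S : Type*} [CommRing R] [CommRing S] [Algebra R S]

lemma Ideal.map_rid_baseChange (I : Ideal R) :
    (I.baseChange S).map (TensorProduct.AlgebraTensorModule.rid R S S).toLinearMap =
      (I.map (algebraMap R S) : Submodule S S) := by
  rw [Submodule.baseChange_eq_span, Submodule.map_span, Ideal.map, Submodule.map_coe,
    ← Set.image_comp]
  congr 2
  ext x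
  simp [Algebra.algebraMap_eq_smul_one]

lemma Ideal.nonempty_linearEquiv_self_of_isPrincipal {J : Ideal S} (hJ : J.IsPrincipal) {c : S}
    (hcJ : c ∈ J) (hc : c ∈ S⁰) : Nonempty (J ≃ₗ[S] S) := by
  obtain ⟨g, rfl⟩ := hJ
  obtain ⟨y, rfl⟩ := mem_span_singleton'.mp hcJ
  have hg : Function.Injective (LinearMap.toSpanSingleton S S g) := by
    refine (injective_iff_map_eq_zero _).mpr fun x hx => ?_
    refine (mul_right_mem_nonZeroDivisors_eq_zero_iff hc).mp ?_
    rw [LinearMap.toSpanSingleton_apply, smul_eq_mul] at hx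
    rw [mul_left_comm, hx, mul_zero]
  exact ⟨((LinearEquiv.ofInjective _ hg).trans
    (LinearEquiv.ofEq _ _ (LinearMap.range_toSpanSingleton g))).symm⟩

lemma algebraMap_mem_nonZeroDivisors_of_flat [Module.Flat R S] {c : R} (hc : c ∈ R⁰) :
    algebraMap R S c ∈ S⁰ := by
  have hreg := Module.Flat.isSMulRegular_of_nonZeroDivisors (M := S) hc
  refine mem_nonZeroDivisors_iff_right.mpr fun x hx => hreg ?_
  change c • x = c • 0
  rw [Algebra.smul_def, mul_comm, hx, smul_zero]

variable [Module.Flat R S]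

noncomputable def Ideal.tensorEquivMap (I : Ideal R) :
    S ⊗[R] I ≃ₗ[S] I.map (algebraMap R S) :=
  (Submodule.toBaseChange.toLinearEquiv S I).trans
    (((TensorProduct.AlgebraTensorModule.rid R S S).submoduleMap _).trans
      (LinearEquiv.ofEq _ _ (Ideal.map_rid_baseChange I)))

lemma Ideal.nonempty_tensor_prod_linearEquiv {I : Ideal R}
    (hI : (I.map (algebraMap R S)).IsPrincipal) {c : R} (hcI : c ∈ I) (hc : c ∈ R⁰) :
    Nonempty ((S ⊗[R] (R × I)) ≃ₗ[S] S × S) := by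
  obtain ⟨e⟩ := nonempty_linearEquiv_self_of_isPrincipal hI (mem_map_of_mem _ hcI)
    (algebraMap_mem_nonZeroDivisors_of_flat hc)
  exact ⟨(TensorProduct.prodRight R S S R I).trans
    (.prodCongr (TensorProduct.AlgebraTensorModule.rid R S S) (I.tensorEquivMap.trans e))⟩

end

theorem exists_etale_cover_iso_general
    (R : Type u) [CommRing R] [IsDedekindDomain R]
    (I I' : Ideal R) (hI : I ≠ 0) (hI' : I' ≠ 0) :
    ∃ (S : Type u) (_ : CommRing S) (_ : Algebra R S),
      Algebra.Etale R S ∧ Module.FaithfullyFlat R S ∧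
        Nonempty ((S ⊗[R] (R × ↥I)) ≃ₗ[S] (S ⊗[R] (R × ↥I'))) := by
  obtain ⟨s, hsP, hs⟩ := (Ideal.span_eq_top_iff_finite _).mp
    (Ideal.span_principalizers_inter_eq_top (Ideal.span_principalizers_eq_top hI)
      (Ideal.span_principalizers_eq_top hI'))
  let S := Π z : s, Localization.Away (z : R)
  have hS : Module.FaithfullyFlat R S := .pi_localizationAway _ (by rwa [Subtype.range_coe])
  obtain ⟨c, hcI, hc⟩ := Submodule.exists_mem_ne_zero_of_ne_bot hI
  obtain ⟨c', hcI', hc'⟩ := Submodule.exists_mem_ne_zero_of_ne_bot hI'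
  obtain ⟨e⟩ := Ideal.nonempty_tensor_prod_linearEquiv (S := S)
    (Ideal.isPrincipal_map_pi_localizationAway fun z => (hsP z.2).1) hcI
    (mem_nonZeroDivisors_of_ne_zero hc)
  obtain ⟨e'⟩ := Ideal.nonempty_tensor_prod_linearEquiv (S := S)
    (Ideal.isPrincipal_map_pi_localizationAway fun z => (hsP z.2).2) hcI'
    (mem_nonZeroDivisors_of_ne_zero hc')
  exact ⟨S, _, _, inferInstance, hS, ⟨e.trans e'.symm⟩⟩

/-- Let `R` be a Dedekind domain and `I`, `I'` nonzero ideals of `R`.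
Then there is a faithfully flat étale `R`-algebra `S` such that `S ⊗[R] (R ⊕ I)` and
`S ⊗[R] (R ⊕ I')` are isomorphic as `S`-modules. -/
theorem exists_etale_cover_iso
    (R : Type u) [CommRing R] [IsDomain R] [IsDedekindDomain R]
    (I I' : Ideal R) (hI : I ≠ 0) (hI' : I' ≠ 0) :
    ∃ (S : Type u) (_ : CommRing S) (_ : Algebra R S),
      Algebra.Etale R S ∧ Module.FaithfullyFlat R S ∧
        Nonempty ((S ⊗[R] (R × ↥I)) ≃ₗ[S] (S ⊗[R] (R × ↥I'))) :=
  exists_etale_cover_iso_general R I I' hI hI'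
end

section
/- Let R be a discrete valuation ring with fraction field F and uniformizer π (a generator of the maximal ideal). Let A = { x ∈ Mat₂(R) : the (1,2) entry of x lies in πR }, an R-order in Mat₂(F), and let u = [[0, π], [1, 0]] ∈ Mat₂(F). Then the map x ↦ u x u⁻¹, computed in Mat₂(F), maps A bijectively onto A and is an R-algebra automorphism of A; however, it is not an inner automorphism of A: there is no unit v of A such that u x u⁻¹ = v x v⁻¹ for all x ∈ A. -/
/-! Write `u = !![0, π; 1, 0]`. Inside `Mat₂(R)` the map `x ↦ u x u⁻¹` is characterised by
`ψ x * u = u * x`; since `u` is right-cancellable and every `x ∈ A` admits such a `ψ x ∈ A`,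
this defines an algebra endomorphism of `A`, an involution because `u * u = π • 1` is central.
If `ψ` were conjugation by a unit `v` of `A`, then `ψ E₁₁ = E₂₂` and `E₂₂ v = v E₁₁` force
`v₀₀ = 0`; but then the `(0,0)` entry of `v v⁻¹ = 1` is `v₀₁ (v⁻¹)₁₀ ∈ πR`, so `π` is a unit. -/

open Matrix

/-- The `R`-order `A = { x ∈ Mat₂(R) : x₀₁ ∈ I }` inside `Mat₂(R)`, for an ideal `I` of
`R`; for `I = πR` this is the hereditary order of the statement. -/
def matOrder (R : Type*) [CommRing R] (I : Ideal R) :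
    Subalgebra R (Matrix (Fin 2) (Fin 2) R) where
  carrier := {x | x 0 1 ∈ I}
  mul_mem' := by
    intro x y hx hy
    simp only [Set.mem_setOf_eq] at *
    rw [Matrix.mul_apply, Fin.sum_univ_two]
    exact I.add_mem (I.mul_mem_left _ hy) (I.mul_mem_right _ hx)
  add_mem' := by
    intro x y hx hy
    simpa [Matrix.add_apply] using I.add_mem hx hy
  one_mem' := by
    simp only [Set.mem_setOf_eq, Matrix.one_apply_ne (by decide : (0 : Fin 2) ≠ 1)]
    exact I.zero_mem
  zero_mem' := by
    simp only [Set.mem_setOf_eq, Matrix.zero_apply]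
    exact I.zero_mem
  algebraMap_mem' := by
    intro r
    simp only [Set.mem_setOf_eq, Matrix.algebraMap_matrix_apply,
      if_neg (by decide : ¬(0 : Fin 2) = 1)]
    exact I.zero_mem

namespace Subalgebra

variable {R S : Type*} [CommRing R] [Ring S] [Algebra R S] {A : Subalgebra R S} {u : S}

/-- The map `x ↦ u x u⁻¹` without inverting `u`: the image of `x` is the unique `y ∈ A` with
`y u = u x`. -/
noncomputable def intertwiningHom (hu : IsRightRegular u)
    (hA : ∀ x ∈ A, ∃ y ∈ A, y * u = u * x) : A →ₐ[R] A :=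
  have spec (x : A) := (hA x x.2).choose_spec
  have eq_of_mul {x y : A} (h : (y : S) * u = u * x) : (⟨_, (spec x).1⟩ : A) = y :=
    Subtype.ext (hu ((spec x).2.trans h.symm))
  { toFun x := ⟨_, (spec x).1⟩
    map_one' := eq_of_mul (by simp)
    map_mul' x y := eq_of_mul (by
      rw [MulMemClass.coe_mul, MulMemClass.coe_mul, mul_assoc, (spec y).2, ← mul_assoc,
        (spec x).2, mul_assoc])
    map_zero' := eq_of_mul (by simp)
    map_add' x y := eq_of_mul (by
      simp only [AddMemClass.coe_add, add_mul, mul_add, (spec x).2, (spec y).2])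
    commutes' r := eq_of_mul (by simp [Algebra.commutes]) }

variable (hu : IsRightRegular u) (hA : ∀ x ∈ A, ∃ y ∈ A, y * u = u * x)

theorem intertwiningHom_mul (x : A) : (intertwiningHom hu hA x : S) * u = u * x :=
  (hA x x.2).choose_spec.2

theorem intertwiningHom_apply_eq {x y : A} (h : (y : S) * u = u * x) :
    intertwiningHom hu hA x = y :=
  Subtype.ext (hu ((intertwiningHom_mul hu hA x).trans h.symm))

noncomputable def intertwiningEquiv (hsq : ∀ x ∈ A, Commute (u * u) x) : A ≃ₐ[R] A :=
  have invol : (intertwiningHom hu hA).comp (intertwiningHom hu hA) = AlgHom.id R A :=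
    AlgHom.ext fun x => Subtype.ext <| hu.mul hu <| by
      simp only [AlgHom.comp_apply, AlgHom.id_apply]
      rw [← mul_assoc, intertwiningHom_mul, mul_assoc, intertwiningHom_mul, ← mul_assoc,
        (hsq x x.2).eq]
  AlgEquiv.ofAlgHom _ _ invol invol

end Subalgebra

section matOrder

variable {R : Type*} [CommRing R]

theorem exists_mem_matOrder_mul_antidiag_eq (π : R) {x : Matrix (Fin 2) (Fin 2) R}
    (hx : x ∈ matOrder R (Ideal.span {π})) :
    ∃ y ∈ matOrder R (Ideal.span {π}), y * !![0, π; 1, 0] = !![0, π; 1, 0] * x := by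
  obtain ⟨b, hb⟩ := Ideal.mem_span_singleton'.mp hx
  refine ⟨!![x 1 1, π * x 1 0; b, x 0 0],
    Ideal.mem_span_singleton'.mpr ⟨x 1 0, mul_comm _ _⟩, ?_⟩
  rw [eta_fin_two x, ← hb]
  simp [mul_comm]

theorem antidiag_mul_self (π : R) : !![0, π; 1, 0] * !![0, π; 1, 0] = π • 1 := by
  ext i j
  fin_cases i <;> fin_cases j <;> simp

theorem isRightRegular_antidiag {π : R} (hπ : IsLeftRegular π) :
    IsRightRegular !![0, π; 1, 0] := fun y z h => by
  have h' := congrArg (· * !![0, π; 1, 0]) h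
  simp only [mul_assoc, antidiag_mul_self, mul_smul_comm, mul_one] at h'
  exact hπ.matrix h'

variable {π : R} (hπ : IsLeftRegular π)

noncomputable def matOrderConj :
    matOrder R (Ideal.span {π}) ≃ₐ[R] matOrder R (Ideal.span {π}) :=
  Subalgebra.intertwiningEquiv (isRightRegular_antidiag hπ)
    (fun _ hx => exists_mem_matOrder_mul_antidiag_eq π hx)
    (fun x _ => by rw [antidiag_mul_self]; exact (Commute.one_left x).smul_left π)

theorem matOrderConj_mul_antidiag (x : matOrder R (Ideal.span {π})) :
    (matOrderConj hπ x : Matrix (Fin 2) (Fin 2) R) * !![0, π; 1, 0] = !![0, π; 1, 0] * x :=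
  Subalgebra.intertwiningHom_mul (isRightRegular_antidiag hπ)
    (fun _ hx => exists_mem_matOrder_mul_antidiag_eq π hx) x

theorem matOrderConj_apply_eq {x y : matOrder R (Ideal.span {π})}
    (h : (y : Matrix (Fin 2) (Fin 2) R) * !![0, π; 1, 0] = !![0, π; 1, 0] * x) :
    matOrderConj hπ x = y :=
  Subalgebra.intertwiningHom_apply_eq (isRightRegular_antidiag hπ)
    (fun _ hx => exists_mem_matOrder_mul_antidiag_eq π hx) h

theorem unit_matOrder_apply_zero_zero_ne_zero {I : Ideal R} (hI : I ≠ ⊤)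
    (v : (matOrder R I)ˣ) : (v : Matrix (Fin 2) (Fin 2) R) 0 0 ≠ 0 := by
  intro h0
  have h := congrArg (fun m : matOrder R I => (m : Matrix (Fin 2) (Fin 2) R) 0 0) v.mul_inv
  simp only [MulMemClass.coe_mul, Matrix.mul_apply, Fin.sum_univ_two, h0, zero_mul, zero_add,
    OneMemClass.coe_one, one_apply_eq] at h
  exact hI ((Ideal.eq_top_iff_one I).mpr (h ▸ I.mul_mem_right _ v.val.2))

theorem matOrderConj_not_inner (hπu : ¬IsUnit π) :
    ¬∃ v : (matOrder R (Ideal.span {π}))ˣ,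
      ∀ x : matOrder R (Ideal.span {π}), matOrderConj hπ x = v * x * ↑v⁻¹ := by
  rintro ⟨v, hv⟩
  let e₁₁ : matOrder R (Ideal.span {π}) := ⟨!![1, 0; 0, 0], (Ideal.span {π}).zero_mem⟩
  let e₂₂ : matOrder R (Ideal.span {π}) := ⟨!![0, 0; 0, 1], (Ideal.span {π}).zero_mem⟩
  have hconj : matOrderConj hπ e₁₁ = e₂₂ := matOrderConj_apply_eq hπ <| by
    ext i j
    fin_cases i <;> fin_cases j <;> simp [e₁₁, e₂₂]
  have hcomm : e₂₂ * v = v * e₁₁ := by rw [← hconj, hv, Units.inv_mul_cancel_right]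
  have h00 := congrArg
    (fun m : matOrder R (Ideal.span {π}) => (m : Matrix (Fin 2) (Fin 2) R) 0 0) hcomm
  refine unit_matOrder_apply_zero_zero_ne_zero (by rwa [Ne, Ideal.span_singleton_eq_top]) v ?_
  simpa [e₁₁, e₂₂, Matrix.mul_apply] using h00.symm

end matOrder

/-- Let `R` be a discrete valuation ring with fraction field `F` and
uniformizer `π`, let `A = { x ∈ Mat₂(R) : x₀₁ ∈ πR }` and `u = [[0, π], [1, 0]] ∈ Mat₂(F)`.
Then `u` is invertible and the map `x ↦ u x u⁻¹`, computed in `Mat₂(F)`, restricts to an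
`R`-algebra automorphism `ψ` of `A` (in particular it maps `A` bijectively onto `A`);
however `ψ` is not inner: there is no unit `v` of `A` with `ψ x = v x v⁻¹` for all `x`. -/
theorem conjugation_automorphism_not_inner
    (R F : Type*) [CommRing R] [IsDomain R] [IsDiscreteValuationRing R]
    [Field F] [Algebra R F] [IsFractionRing R F]
    (π : R) (hπ : Ideal.span {π} = IsLocalRing.maximalIdeal R) :
    IsUnit (!![0, algebraMap R F π; 1, 0]) ∧
    ∃ ψ : matOrder R (Ideal.span {π}) ≃ₐ[R] matOrder R (Ideal.span {π}),
      (∀ x : matOrder R (Ideal.span {π}),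
        (algebraMap R F).mapMatrix ((ψ x : Matrix (Fin 2) (Fin 2) R))
          = !![0, algebraMap R F π; 1, 0]
            * (algebraMap R F).mapMatrix ((x : Matrix (Fin 2) (Fin 2) R))
            * (!![0, algebraMap R F π; 1, 0])⁻¹) ∧
      ¬ ∃ v : (matOrder R (Ideal.span {π}))ˣ,
          ∀ x : matOrder R (Ideal.span {π}), ψ x = v * x * ↑v⁻¹ := by
  have hπ0 : π ≠ 0 :=
    mt Ideal.span_singleton_eq_bot.mpr (hπ ▸ IsDiscreteValuationRing.not_a_field R)
  have hπu : ¬IsUnit π := by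
    rw [← Ideal.span_singleton_eq_top, hπ]
    exact (IsLocalRing.maximalIdeal.isMaximal R).ne_top
  have hπreg : IsLeftRegular π := (IsRegular.of_ne_zero hπ0).left
  have hdet : IsUnit (!![0, algebraMap R F π; 1, 0]).det := by
    simpa [det_fin_two_of] using (map_ne_zero_iff _ (IsFractionRing.injective R F)).mpr hπ0
  have hmap : (algebraMap R F).mapMatrix !![0, π; 1, 0] = !![0, algebraMap R F π; 1, 0] := by
    ext i j
    fin_cases i <;> fin_cases j <;> simp
  refine ⟨(isUnit_iff_isUnit_det _).mpr hdet, matOrderConj hπreg, fun x => ?_,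
    matOrderConj_not_inner hπreg hπu⟩
  rw [← hmap, ← map_mul, ← matOrderConj_mul_antidiag hπreg, map_mul, hmap,
    mul_nonsing_inv_cancel_right _ _ hdet]
end

section
/- Let R be a discrete valuation ring with maximal ideal m. The R-algebra A = { x ∈ Mat₂(R) : the (1,2) entry of x lies in m } is not isomorphic to Mat₂(R) as an R-algebra. -/
open Matrix

/-! The matrix units `E₀₁, E₁₀` of `Mat₂(R)` satisfy `x² = y² = 0` and `xy + yx = 1`.
In the order, a square-zero `x` has `x₀₀² = -x₀₁x₁₀ ∈ m`, so its whole first row lies in the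
prime `m`; then the `(0,0)` entry of `xy + yx` lies in `m` and cannot be `1`. -/

section

variable {R : Type*} [CommRing R] {I : Ideal R}

theorem Matrix.apply_zero_zero_mem_of_mul_self_eq_zero [I.IsPrime] {Z : Matrix (Fin 2) (Fin 2) R}
    (hZ : Z * Z = 0) (h01 : Z 0 1 ∈ I) : Z 0 0 ∈ I := by
  have h00 : Z 0 0 * Z 0 0 + Z 0 1 * Z 1 0 = 0 := by
    simpa [Matrix.mul_apply, Fin.sum_univ_two] using congrFun (congrFun hZ 0) 0
  have hsq : Z 0 0 * Z 0 0 ∈ I := by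
    rw [eq_neg_of_add_eq_zero_left h00]
    exact I.neg_mem (I.mul_mem_right _ h01)
  exact (Ideal.IsPrime.mem_or_mem ‹_› hsq).elim id id

theorem Matrix.mul_apply_zero_zero_mem {X : Matrix (Fin 2) (Fin 2) R} (Y : Matrix (Fin 2) (Fin 2) R)
    (h00 : X 0 0 ∈ I) (h01 : X 0 1 ∈ I) : (X * Y) 0 0 ∈ I := by
  rw [Matrix.mul_apply, Fin.sum_univ_two]
  exact I.add_mem (I.mul_mem_right _ h00) (I.mul_mem_right _ h01)

theorem matOrder.mul_add_mul_ne_one [I.IsPrime] {x y : matOrder R I} (hx : x * x = 0)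
    (hy : y * y = 0) : x * y + y * x ≠ 1 := by
  intro hxy
  have hX : (x : Matrix (Fin 2) (Fin 2) R) 0 0 ∈ I :=
    Matrix.apply_zero_zero_mem_of_mul_self_eq_zero (by simpa using congrArg Subtype.val hx) x.2
  have hY : (y : Matrix (Fin 2) (Fin 2) R) 0 0 ∈ I :=
    Matrix.apply_zero_zero_mem_of_mul_self_eq_zero (by simpa using congrArg Subtype.val hy) y.2
  have h00 := congrFun (congrFun (congrArg Subtype.val hxy) 0) 0
  simp only [Subalgebra.coe_add, Subalgebra.coe_mul, Subalgebra.coe_one, Matrix.add_apply,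
    Matrix.one_apply_eq] at h00
  exact Ideal.IsPrime.one_notMem ‹_› (h00 ▸ I.add_mem (Matrix.mul_apply_zero_zero_mem _ hX x.2)
    (Matrix.mul_apply_zero_zero_mem _ hY y.2))

end

/-- Let `R` be a discrete valuation ring with maximal ideal `m`.  The
`R`-algebra `A = { x ∈ Mat₂(R) : x₀₁ ∈ m }` is not isomorphic to `Mat₂(R)` as an
`R`-algebra. -/
theorem matOrder_not_iso_matrix
    (R : Type*) [CommRing R] [IsDomain R] [IsDiscreteValuationRing R] :
    IsEmpty ((matOrder R (IsLocalRing.maximalIdeal R)) ≃ₐ[R] Matrix (Fin 2) (Fin 2) R) := by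
  refine ⟨fun f => ?_⟩
  let e : Matrix (Fin 2) (Fin 2) R := !![0, 1; 0, 0]
  let e' : Matrix (Fin 2) (Fin 2) R := !![0, 0; 1, 0]
  have he : e * e = 0 := by
    ext i j; fin_cases i <;> fin_cases j <;> simp [e, Matrix.mul_apply]
  have he' : e' * e' = 0 := by
    ext i j; fin_cases i <;> fin_cases j <;> simp [e', Matrix.mul_apply]
  have hee' : e * e' + e' * e = 1 := by
    ext i j; fin_cases i <;> fin_cases j <;> simp [e, e']
  refine matOrder.mul_add_mul_ne_one (x := f.symm e) (y := f.symm e')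
    (by rw [← _root_.map_mul, he, map_zero]) (by rw [← _root_.map_mul, he', map_zero]) ?_
  rw [← _root_.map_mul f.symm e e', ← _root_.map_mul f.symm e' e, ← map_add, hee', map_one]
end
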